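/- Let g : ℕ → ℕ satisfy 0 ≤ g(k) ≤ k for every k ≥ 1. Then the sequence whose k-th term is the average-case objective PAR of the bounded-bisection-auction tiling T_{g(k), k−g(k)} for the function A_k is bounded if and only if g is bounded. In particular, for all 0 ≤ c ≤ k this PAR lies between (c+1)/2 and (c+3)/2. -/

import Mathlib

open Finset

/-- The value space `{0,…,2^k−1} × {0,…,2^k−1}`. -/
def Vk (k : ℕ) : Finset (ℕ × ℕ) := Finset.range (2 ^ k) ×ˢ Finset.range (2 ^ k)

/-- A tiling of `Vk k`: a finite collection of nonempty rectangles partitioning `Vk k`. -/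
def IsTiling (k : ℕ) (T : Finset (Finset (ℕ × ℕ))) : Prop :=
  (∀ R ∈ T, ∃ S S' : Finset ℕ, R = S ×ˢ S') ∧
    (∀ R ∈ T, R.Nonempty) ∧ (∀ R ∈ T, R ⊆ Vk k) ∧ ∀ x ∈ Vk k, ∃! R, R ∈ T ∧ x ∈ R

/-- `f`-monochromaticity of a tiling. -/
def Mono {β : Type} (f : ℕ × ℕ → β) (T : Finset (Finset (ℕ × ℕ))) : Prop :=
  ∀ R ∈ T, ∀ x ∈ R, ∀ y ∈ R, f x = f y

/-- The tile of `T` containing `x` (union of all tiles containing `x`; for a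
tiling this is exactly the unique tile containing `x`). -/
def tileOf (T : Finset (Finset (ℕ × ℕ))) (x : ℕ × ℕ) : Finset (ℕ × ℕ) :=
  (T.filter fun R => x ∈ R).sup id

/-- The ideal region of `x`: the level set of `f x` inside `Vk k`. -/
def ideal {β : Type} [DecidableEq β] (k : ℕ) (f : ℕ × ℕ → β) (x : ℕ × ℕ) : Finset (ℕ × ℕ) :=
  (Vk k).filter fun y => f y = f x

/-- Average-case objective PAR of a tiling w.r.t. the uniform distribution. -/
def avgObjPAR {β : Type} [DecidableEq β] (k : ℕ) (f : ℕ × ℕ → β)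
    (T : Finset (Finset (ℕ × ℕ))) : ℚ :=
  (∑ x ∈ Vk k, ((ideal k f x).card : ℚ) / ((tileOf T x).card : ℚ)) / 2 ^ (2 * k)

/-- Average-case PAR with respect to party 1. -/
def avgPAR1 {β : Type} [DecidableEq β] (k : ℕ) (f : ℕ × ℕ → β)
    (T : Finset (Finset (ℕ × ℕ))) : ℚ :=
  (∑ x ∈ Vk k,
      (((Finset.range (2 ^ k)).filter fun y => f (x.1, y) = f x).card : ℚ) /
        (((Finset.range (2 ^ k)).filter fun y => (x.1, y) ∈ tileOf T x).card : ℚ)) /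
    2 ^ (2 * k)

/-- Average-case PAR with respect to party 2. -/
def avgPAR2 {β : Type} [DecidableEq β] (k : ℕ) (f : ℕ × ℕ → β)
    (T : Finset (Finset (ℕ × ℕ))) : ℚ :=
  (∑ x ∈ Vk k,
      (((Finset.range (2 ^ k)).filter fun y => f (y, x.2) = f x).card : ℚ) /
        (((Finset.range (2 ^ k)).filter fun y => (y, x.2) ∈ tileOf T x).card : ℚ)) /
    2 ^ (2 * k)

/-- The millionaires function: `1` if `x1 ≥ x2`, else `2`. -/
def Mil (x : ℕ × ℕ) : ℕ := if x.2 ≤ x.1 then 1 else 2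

/-- The second-price auction function. -/
def Auc (x : ℕ × ℕ) : ℕ × ℕ := if x.2 ≤ x.1 then (1, x.2) else (2, x.1)

/-- Translate a tile by `(a, a)`. -/
def shiftTile (a : ℕ) (R : Finset (ℕ × ℕ)) : Finset (ℕ × ℕ) :=
  R.image fun p => (p.1 + a, p.2 + a)

/-- The bisection-protocol tiling `B_k`. -/
def Btile : ℕ → Finset (Finset (ℕ × ℕ))
  | 0 => {{(0, 0)}}
  | j + 1 =>
    Btile j ∪ (Btile j).image (shiftTile (2 ^ j)) ∪
      {Finset.range (2 ^ j) ×ˢ Finset.Ico (2 ^ j) (2 ^ (j + 1)),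
        Finset.Ico (2 ^ j) (2 ^ (j + 1)) ×ˢ Finset.range (2 ^ j)}

/-- The bounded-bisection-auction tiling `T_{c,i}`. -/
def BBA : ℕ → ℕ → Finset (Finset (ℕ × ℕ))
  | 0, i =>
    (Finset.range (2 ^ i)).image (fun p => Finset.Ico p (2 ^ i) ×ˢ ({p} : Finset ℕ)) ∪
      (Finset.range (2 ^ i - 1)).image fun p => ({p} : Finset ℕ) ×ˢ Finset.Ico (p + 1) (2 ^ i)
  | c + 1, i =>
    BBA c i ∪ (BBA c i).image (shiftTile (2 ^ (c + i))) ∪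
      (Finset.range (2 ^ (c + i))).image
        (fun j => Finset.Ico (2 ^ (c + i)) (2 ^ (c + i + 1)) ×ˢ ({j} : Finset ℕ)) ∪
      (Finset.range (2 ^ (c + i))).image fun j =>
        ({j} : Finset ℕ) ×ˢ Finset.Ico (2 ^ (c + i)) (2 ^ (c + i + 1))

/-- The public-good function: `true` iff `x1 + x2 ≥ 2^k − 1` ("Build"). -/
def PG (k : ℕ) (x : ℕ × ℕ) : Bool := decide (2 ^ k - 1 ≤ x.1 + x.2)

/-- The truthful public-good function: `none` = "Do Not Build". -/
def TPG (c : ℕ) (x : ℕ × ℕ) : Option (ℕ × ℕ) :=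
  if x.1 + x.2 < c then none else some (c - x.2, c - x.1)

/-- The tiling of `Vk k` into singleton cells (sealed-bid auction). -/
def sealedTiling (k : ℕ) : Finset (Finset (ℕ × ℕ)) :=
  (Vk k).image fun x => ({x} : Finset (ℕ × ℕ))

/-!
Write `k = c + i` and `n = 2^k`. Passing from `T_{c,i}` to `T_{c+1,i}`, a point of the lower-left
quadrant keeps its tile while its level set of `A_{k+1}` grows by `n`, a point of the upper-right
quadrant keeps both up to translation, and the off-diagonal quadrants are covered by tiles of size
`n`. Summing over the four quadrants, `S(c) = Σ_x |R^I(x)| / |R^T(x)|` and the tile count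
`H(c) = Σ_x 1 / |R^T(x)|` satisfy `S(c+1) = 2 S(c) + n H(c) + 3 n²` and `H(c+1) = 2 H(c) + 2 n`,
starting from `S(0) = 4^i` and `H(0) = 2^(i+1) - 1`, since the tiles of `T_{0,i}` are the level sets
of `A_i`. Solving, the PAR of `T_{c,k-c}` equals `(c+3)/2 - 2^-(c+1) - (2^c - 1) / 2^(k+1)`,
which lies between `(c+1)/2` and `(c+3)/2`; boundedness in `g` follows.
-/

theorem Finset.sum_one_div_card_fiber {α β K : Type*} [DecidableEq β] [DivisionSemiring K]
    [CharZero K] (s : Finset α) (f : α → β) :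
    ∑ x ∈ s, (1 : K) / #{y ∈ s | f y = f x} = #(s.image f) := by
  rw [← sum_fiberwise_of_maps_to (g := f) (t := s.image f) fun x hx => mem_image_of_mem f hx]
  rw [card_eq_sum_ones, Nat.cast_sum]
  refine sum_congr rfl fun b hb => ?_
  have hne : (#{y ∈ s | f y = b} : K) ≠ 0 := by
    obtain ⟨a, ha, rfl⟩ := mem_image.mp hb
    exact Nat.cast_ne_zero.mpr (card_ne_zero_of_mem (mem_filter.mpr ⟨ha, rfl⟩))
  rw [sum_congr rfl fun x hx => by rw [(mem_filter.mp hx).2], sum_const, nsmul_eq_mul,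
    mul_one_div_cancel hne, Nat.cast_one]

theorem tileOf_eq_of_unique {T : Finset (Finset (ℕ × ℕ))} {x : ℕ × ℕ}
    {R : Finset (ℕ × ℕ)} (hR : R ∈ T) (hx : x ∈ R) (huniq : ∀ R' ∈ T, x ∈ R' → R' = R) :
    tileOf T x = R := by
  have : T.filter (fun R => x ∈ R) = {R} := by
    ext R'
    simp only [mem_filter, mem_singleton]
    exact ⟨fun h => huniq R' h.1 h.2, fun h => h ▸ ⟨hR, hx⟩⟩
  rw [tileOf, this, sup_singleton, id]

theorem mem_Vk {k : ℕ} {x : ℕ × ℕ} : x ∈ Vk k ↔ x.1 < 2 ^ k ∧ x.2 < 2 ^ k := by simp [Vk]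

theorem ideal_Auc_of_le {k : ℕ} {x : ℕ × ℕ} (h : x.2 ≤ x.1) :
    ideal k Auc x = Ico x.2 (2 ^ k) ×ˢ {x.2} := by
  ext ⟨a, b⟩
  simp only [ideal, Auc, mem_Vk, mem_filter, mem_product, mem_Ico, mem_singleton, if_pos h]
  split_ifs <;>
    simp only [Prod.mk.injEq, true_and, OfNat.ofNat_ne_one, false_and, and_false, false_iff,
      not_and] <;> omega

theorem ideal_Auc_of_lt {k : ℕ} {x : ℕ × ℕ} (h : x.1 < x.2) :
    ideal k Auc x = {x.1} ×ˢ Ico (x.1 + 1) (2 ^ k) := by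
  ext ⟨a, b⟩
  simp only [ideal, Auc, mem_Vk, mem_filter, mem_product, mem_Ico, mem_singleton,
    if_neg (not_le.mpr h)]
  split_ifs <;>
    simp only [Prod.mk.injEq, true_and, OfNat.one_ne_ofNat, false_and, and_false, false_iff,
      not_and, not_lt] <;> omega

theorem card_ideal_Auc (k : ℕ) (x : ℕ × ℕ) :
    #(ideal k Auc x) = if x.2 ≤ x.1 then 2 ^ k - x.2 else 2 ^ k - (x.1 + 1) := by
  split_ifs with h
  · rw [ideal_Auc_of_le h, card_product, Nat.card_Ico, card_singleton, mul_one]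
  · rw [ideal_Auc_of_lt (not_le.mp h), card_product, Nat.card_Ico, card_singleton, one_mul]

theorem image_Auc_Vk (k : ℕ) :
    (Vk k).image Auc = ({1} ×ˢ range (2 ^ k)) ∪ ({2} ×ˢ range (2 ^ k - 1)) := by
  ext ⟨t, p⟩
  simp only [mem_image, mem_Vk, Auc, mem_union, mem_product, mem_singleton, mem_range,
    Prod.exists]
  constructor
  · rintro ⟨a, b, ⟨ha, hb⟩, h⟩
    split_ifs at h <;> simp only [Prod.mk.injEq] at h <;> omega
  · rintro (⟨rfl, hp⟩ | ⟨rfl, hp⟩)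
    · exact ⟨p, p, ⟨hp, hp⟩, by simp⟩
    · exact ⟨p, p + 1, ⟨by omega, by omega⟩, by simp⟩

theorem card_image_Auc_Vk (k : ℕ) : #((Vk k).image Auc) = 2 * 2 ^ k - 1 := by
  have hdisj : Disjoint ({1} ×ˢ range (2 ^ k)) ({2} ×ˢ range (2 ^ k - 1)) :=
    disjoint_product.mpr (Or.inl (by simp))
  rw [image_Auc_Vk, card_union_of_disjoint hdisj, card_product, card_product, card_singleton,
    card_singleton, card_range, card_range]
  have := Nat.one_le_two_pow (n := k)
  omega

theorem mem_BBA_zero {i : ℕ} {R : Finset (ℕ × ℕ)} :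
    R ∈ BBA 0 i ↔ (∃ p < 2 ^ i, R = Ico p (2 ^ i) ×ˢ {p}) ∨
      ∃ p < 2 ^ i - 1, R = {p} ×ˢ Ico (p + 1) (2 ^ i) := by
  simp only [BBA, mem_union, mem_image, mem_range, eq_comm]

theorem mem_BBA_succ {c i : ℕ} {R : Finset (ℕ × ℕ)} :
    R ∈ BBA (c + 1) i ↔ R ∈ BBA c i ∨ (∃ R' ∈ BBA c i, R = shiftTile (2 ^ (c + i)) R') ∨
      (∃ j < 2 ^ (c + i), R = Ico (2 ^ (c + i)) (2 ^ (c + i + 1)) ×ˢ {j}) ∨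
      ∃ j < 2 ^ (c + i), R = {j} ×ˢ Ico (2 ^ (c + i)) (2 ^ (c + i + 1)) := by
  simp only [BBA, mem_union, mem_image, mem_range, eq_comm, or_assoc]

theorem mem_shiftTile {a : ℕ} {R : Finset (ℕ × ℕ)} {x : ℕ × ℕ} :
    x ∈ shiftTile a R ↔ a ≤ x.1 ∧ a ≤ x.2 ∧ (x.1 - a, x.2 - a) ∈ R := by
  simp only [shiftTile, mem_image, Prod.exists, Prod.ext_iff]
  constructor
  · rintro ⟨p, q, hpq, h1, h2⟩
    obtain ⟨rfl, rfl⟩ : x = (p + a, q + a) := Prod.ext h1.symm h2.symm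
    simpa using hpq
  · rintro ⟨h1, h2, h⟩
    exact ⟨_, _, h, by omega, by omega⟩

theorem card_shiftTile (a : ℕ) (R : Finset (ℕ × ℕ)) : #(shiftTile a R) = #R :=
  card_image_of_injective _ fun p q h => by
    simp only [Prod.ext_iff] at h ⊢
    omega

theorem subset_Vk_of_mem_BBA {c i : ℕ} {R : Finset (ℕ × ℕ)} (hR : R ∈ BBA c i) :
    R ⊆ Vk (c + i) := by
  intro x hx
  rw [mem_Vk]
  induction c generalizing R x with
  | zero =>
    rw [Nat.zero_add]
    rcases mem_BBA_zero.mp hR with ⟨p, hp, rfl⟩ | ⟨p, hp, rfl⟩ <;>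
      simp only [mem_product, mem_Ico, mem_singleton] at hx <;> omega
  | succ c ih =>
    have hpow : 2 ^ (c + 1 + i) = 2 ^ (c + i) + 2 ^ (c + i) := by
      rw [Nat.add_right_comm, pow_succ]; omega
    rw [hpow]
    rcases mem_BBA_succ.mp hR with h | ⟨R', hR', rfl⟩ | ⟨j, hj, rfl⟩ | ⟨j, hj, rfl⟩
    · have := ih h hx; omega
    · obtain ⟨h1, h2, h⟩ := mem_shiftTile.mp hx
      have := ih hR' h; simp only at this; omega
    all_goals simp only [mem_product, mem_Ico, mem_singleton, pow_succ] at hx; omega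

/-- `R^T(x)` for `T = T_{c,i}`. -/
def bbaTile : ℕ → ℕ → ℕ × ℕ → Finset (ℕ × ℕ)
  | 0, i, x => ideal i Auc x
  | c + 1, i, x =>
    if x.1 < 2 ^ (c + i) then
      if x.2 < 2 ^ (c + i) then bbaTile c i x
      else {x.1} ×ˢ Ico (2 ^ (c + i)) (2 ^ (c + i + 1))
    else
      if x.2 < 2 ^ (c + i) then Ico (2 ^ (c + i)) (2 ^ (c + i + 1)) ×ˢ {x.2}
      else shiftTile (2 ^ (c + i)) (bbaTile c i (x.1 - 2 ^ (c + i), x.2 - 2 ^ (c + i)))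

theorem bbaTile_mem_BBA_and_mem {c i : ℕ} {x : ℕ × ℕ} (hx : x ∈ Vk (c + i)) :
    bbaTile c i x ∈ BBA c i ∧ x ∈ bbaTile c i x := by
  induction c generalizing x with
  | zero =>
    rw [Nat.zero_add, mem_Vk] at hx
    refine ⟨mem_BBA_zero.mpr ?_, mem_filter.mpr ⟨mem_Vk.mpr hx, rfl⟩⟩
    by_cases h : x.2 ≤ x.1
    · exact Or.inl ⟨x.2, by omega, ideal_Auc_of_le h⟩
    · exact Or.inr ⟨x.1, by omega, ideal_Auc_of_lt (not_le.mp h)⟩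
  | succ c ih =>
    have hpow : 2 ^ (c + 1 + i) = 2 ^ (c + i + 1) := by rw [Nat.add_right_comm]
    rw [mem_Vk, hpow, pow_succ] at hx
    simp only [bbaTile]
    split_ifs with h1 h2 h2
    · obtain ⟨hR, hxR⟩ := ih (mem_Vk.mpr ⟨h1, h2⟩)
      exact ⟨mem_BBA_succ.mpr (Or.inl hR), hxR⟩
    · refine ⟨mem_BBA_succ.mpr (Or.inr (Or.inr (Or.inr ⟨x.1, h1, rfl⟩))), ?_⟩
      simp only [mem_product, mem_singleton, mem_Ico, pow_succ, true_and]
      omega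
    · refine ⟨mem_BBA_succ.mpr (Or.inr (Or.inr (Or.inl ⟨x.2, h2, rfl⟩))), ?_⟩
      simp only [mem_product, mem_singleton, mem_Ico, pow_succ, and_true]
      omega
    · have hx' : (x.1 - 2 ^ (c + i), x.2 - 2 ^ (c + i)) ∈ Vk (c + i) := by
        rw [mem_Vk]; omega
      obtain ⟨hR, hxR⟩ := ih hx'
      exact ⟨mem_BBA_succ.mpr (Or.inr (Or.inl ⟨_, hR, rfl⟩)),
        mem_shiftTile.mpr ⟨by omega, by omega, hxR⟩⟩

theorem eq_bbaTile_of_mem_BBA {c i : ℕ} {R : Finset (ℕ × ℕ)} {x : ℕ × ℕ} (hR : R ∈ BBA c i)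
    (hx : x ∈ R) : R = bbaTile c i x := by
  induction c generalizing R x with
  | zero =>
    have hxV := subset_Vk_of_mem_BBA hR hx
    rw [Nat.zero_add, mem_Vk] at hxV
    rcases mem_BBA_zero.mp hR with ⟨p, hp, rfl⟩ | ⟨p, hp, rfl⟩ <;>
      simp only [mem_product, mem_Ico, mem_singleton] at hx
    · rw [bbaTile, ideal_Auc_of_le (by omega), hx.2]
    · rw [bbaTile, ideal_Auc_of_lt (by omega), hx.1]
  | succ c ih =>
    rcases mem_BBA_succ.mp hR with hR | ⟨R', hR', rfl⟩ | ⟨j, hj, rfl⟩ | ⟨j, hj, rfl⟩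
    · have hxV := mem_Vk.mp (subset_Vk_of_mem_BBA hR hx)
      rw [bbaTile, if_pos hxV.1, if_pos hxV.2]
      exact ih hR hx
    · obtain ⟨h1, h2, hx'⟩ := mem_shiftTile.mp hx
      rw [bbaTile, if_neg (by omega), if_neg (by omega), ← ih hR' hx']
    · simp only [mem_product, mem_Ico, mem_singleton] at hx
      rw [bbaTile, if_neg (by omega), if_pos (by omega), hx.2]
    · simp only [mem_product, mem_Ico, mem_singleton] at hx
      rw [bbaTile, if_pos (by omega), if_neg (by omega), hx.1]

theorem tileOf_BBA {c i : ℕ} {x : ℕ × ℕ} (hx : x ∈ Vk (c + i)) :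
    tileOf (BBA c i) x = bbaTile c i x :=
  tileOf_eq_of_unique (bbaTile_mem_BBA_and_mem hx).1 (bbaTile_mem_BBA_and_mem hx).2
    fun _ hR hxR => eq_bbaTile_of_mem_BBA hR hxR

theorem sum_Vk_succ {M : Type*} [AddCommMonoid M] (k : ℕ) (φ : ℕ × ℕ → M) :
    ∑ x ∈ Vk (k + 1), φ x = ∑ x ∈ Vk k, (φ x + φ (x.1, 2 ^ k + x.2) + φ (2 ^ k + x.1, x.2) +
      φ (2 ^ k + x.1, 2 ^ k + x.2)) := by
  simp only [Vk, sum_product, pow_succ, mul_two, sum_range_add, sum_add_distrib]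
  abel

theorem card_Vk (k : ℕ) : #(Vk k) = 2 ^ k * 2 ^ k := by
  rw [Vk, card_product, card_range]

theorem sum_Vk_fst_add_snd_add_one (k : ℕ) :
    ∑ x ∈ Vk k, ((x.1 : ℚ) + x.2 + 1) = 2 ^ k * 2 ^ k * 2 ^ k := by
  have gauss : (∑ a ∈ range (2 ^ k), (a : ℚ)) * 2 = 2 ^ k * (2 ^ k - 1) := by
    have := Nat.one_le_two_pow (n := k)
    have h := congrArg (Nat.cast : ℕ → ℚ) (sum_range_id_mul_two (2 ^ k))
    push_cast [Nat.cast_sub this] at h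
    exact h
  simp only [Vk, sum_product, sum_add_distrib, sum_const, card_product, card_range,
    nsmul_eq_mul, ← mul_sum]
  push_cast
  linear_combination (2 ^ k : ℚ) * gauss

theorem card_bbaTile_succ {c i : ℕ} {x : ℕ × ℕ} (hx : x ∈ Vk (c + i)) :
    #(bbaTile (c + 1) i x) = #(bbaTile c i x) ∧
      #(bbaTile (c + 1) i (x.1, 2 ^ (c + i) + x.2)) = 2 ^ (c + i) ∧
      #(bbaTile (c + 1) i (2 ^ (c + i) + x.1, x.2)) = 2 ^ (c + i) ∧
      #(bbaTile (c + 1) i (2 ^ (c + i) + x.1, 2 ^ (c + i) + x.2)) = #(bbaTile c i x) := by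
  rw [mem_Vk] at hx
  simp only [bbaTile, if_pos hx.1, if_pos hx.2, if_neg (Nat.not_lt.mpr (Nat.le_add_right _ _)),
    Nat.add_sub_cancel_left, card_shiftTile, card_product, card_singleton, Nat.card_Ico,
    pow_succ, one_mul, mul_one, true_and, and_true]
  omega

theorem card_ideal_Auc_succ {k : ℕ} {x : ℕ × ℕ} (hx : x ∈ Vk k) :
    #(ideal (k + 1) Auc x) = #(ideal k Auc x) + 2 ^ k ∧
      #(ideal (k + 1) Auc (x.1, 2 ^ k + x.2)) + (x.1 + 1) = 2 * 2 ^ k ∧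
      #(ideal (k + 1) Auc (2 ^ k + x.1, x.2)) + x.2 = 2 * 2 ^ k ∧
      #(ideal (k + 1) Auc (2 ^ k + x.1, 2 ^ k + x.2)) = #(ideal k Auc x) := by
  rw [mem_Vk] at hx
  simp only [card_ideal_Auc, pow_succ]
  split_ifs <;> omega

def ratioSum (c i : ℕ) : ℚ :=
  ∑ x ∈ Vk (c + i), (#(ideal (c + i) Auc x) : ℚ) / #(bbaTile c i x)

/-- Each tile `R` contributes `|R| · (1 / |R|) = 1`, so this counts the tiles of `T_{c,i}`. -/
def tileCount (c i : ℕ) : ℚ :=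
  ∑ x ∈ Vk (c + i), (1 : ℚ) / #(bbaTile c i x)

theorem tileCount_zero (i : ℕ) : tileCount 0 i = 2 * 2 ^ i - 1 := by
  rw [tileCount, Nat.zero_add]
  have hfiber := Finset.sum_one_div_card_fiber (K := ℚ) (Vk i) Auc
  rw [card_image_Auc_Vk, Nat.cast_sub (by have := Nat.one_le_two_pow (n := i); omega)] at hfiber
  push_cast at hfiber
  exact hfiber

theorem tileCount_succ (c i : ℕ) :
    tileCount (c + 1) i = 2 * tileCount c i + 2 * 2 ^ (c + i) := by
  rw [tileCount, Nat.add_right_comm, sum_Vk_succ]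
  have hterm : ∀ x ∈ Vk (c + i),
      (1 : ℚ) / #(bbaTile (c + 1) i x) + 1 / #(bbaTile (c + 1) i (x.1, 2 ^ (c + i) + x.2)) +
        1 / #(bbaTile (c + 1) i (2 ^ (c + i) + x.1, x.2)) +
        1 / #(bbaTile (c + 1) i (2 ^ (c + i) + x.1, 2 ^ (c + i) + x.2)) =
      2 * (1 / #(bbaTile c i x)) + 2 / 2 ^ (c + i) := by
    intro x hx
    obtain ⟨h1, h2, h3, h4⟩ := card_bbaTile_succ hx
    rw [h1, h2, h3, h4]
    push_cast
    ring
  have hn : (2 : ℚ) ^ (c + i) ≠ 0 := by positivity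
  rw [sum_congr rfl hterm, sum_add_distrib, ← mul_sum, sum_const, card_Vk, nsmul_eq_mul,
    ← tileCount]
  push_cast
  field_simp

theorem ratioSum_zero (i : ℕ) : ratioSum 0 i = 2 ^ i * 2 ^ i := by
  rw [ratioSum, Nat.zero_add]
  have hterm : ∀ x ∈ Vk i, (#(ideal i Auc x) : ℚ) / #(bbaTile 0 i x) = 1 := fun x hx =>
    div_self (Nat.cast_ne_zero.mpr (card_ne_zero_of_mem (mem_filter.mpr ⟨hx, rfl⟩)))
  rw [sum_congr rfl hterm, sum_const, card_Vk, nsmul_one]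
  push_cast
  rfl

theorem ratioSum_succ (c i : ℕ) :
    ratioSum (c + 1) i = 2 * ratioSum c i + 2 ^ (c + i) * tileCount c i +
      3 * (2 ^ (c + i) * 2 ^ (c + i)) := by
  rw [ratioSum, Nat.add_right_comm, sum_Vk_succ]
  have hterm : ∀ x ∈ Vk (c + i),
      (#(ideal (c + i + 1) Auc x) : ℚ) / #(bbaTile (c + 1) i x) +
        #(ideal (c + i + 1) Auc (x.1, 2 ^ (c + i) + x.2)) /
          #(bbaTile (c + 1) i (x.1, 2 ^ (c + i) + x.2)) +
        #(ideal (c + i + 1) Auc (2 ^ (c + i) + x.1, x.2)) /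
          #(bbaTile (c + 1) i (2 ^ (c + i) + x.1, x.2)) +
        #(ideal (c + i + 1) Auc (2 ^ (c + i) + x.1, 2 ^ (c + i) + x.2)) /
          #(bbaTile (c + 1) i (2 ^ (c + i) + x.1, 2 ^ (c + i) + x.2)) =
      2 * (#(ideal (c + i) Auc x) / #(bbaTile c i x)) + 2 ^ (c + i) * (1 / #(bbaTile c i x)) +
        (4 * 2 ^ (c + i) - (x.1 + x.2 + 1)) / 2 ^ (c + i) := by
    intro x hx
    obtain ⟨t1, t2, t3, t4⟩ := card_bbaTile_succ hx
    obtain ⟨r1, r2, r3, r4⟩ := card_ideal_Auc_succ hx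
    have r2' : (#(ideal (c + i + 1) Auc (x.1, 2 ^ (c + i) + x.2)) : ℚ) =
        2 * 2 ^ (c + i) - (x.1 + 1) := by
      rw [eq_sub_iff_add_eq]; exact_mod_cast r2
    have r3' : (#(ideal (c + i + 1) Auc (2 ^ (c + i) + x.1, x.2)) : ℚ) =
        2 * 2 ^ (c + i) - x.2 := by
      rw [eq_sub_iff_add_eq]; exact_mod_cast r3
    rw [t1, t2, t3, t4, r1, r2', r3', r4]
    push_cast
    ring
  rw [sum_congr rfl hterm, sum_add_distrib, sum_add_distrib, ← mul_sum, ← mul_sum, ← sum_div,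
    sum_sub_distrib, sum_Vk_fst_add_snd_add_one, sum_const, card_Vk, ← ratioSum, ← tileCount]
  field_simp
  ring

theorem tileCount_eq (c i : ℕ) : tileCount c i = ((c : ℚ) + 2) * 2 ^ (c + i) - 2 ^ c := by
  induction c with
  | zero => rw [tileCount_zero, Nat.zero_add]; push_cast; ring
  | succ c ih =>
    rw [tileCount_succ, ih, Nat.add_right_comm, pow_succ, pow_succ]
    push_cast
    ring

theorem ratioSum_eq (c i : ℕ) :
    ratioSum c i = 2 ^ (c + i) * (((c : ℚ) + 3) * 2 ^ (c + i) - 2 ^ i - 2 ^ c + 1) / 2 := by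
  induction c with
  | zero => rw [ratioSum_zero, Nat.zero_add]; push_cast; ring
  | succ c ih =>
    rw [ratioSum_succ, ih, tileCount_eq, Nat.add_right_comm, pow_succ, pow_succ]
    push_cast
    ring

theorem avgObjPAR_Auc_BBA {c k : ℕ} (hck : c ≤ k) :
    avgObjPAR k Auc (BBA c (k - c)) =
      ((c : ℚ) + 3) / 2 - 1 / 2 ^ (c + 1) - (2 ^ c - 1) / 2 ^ (k + 1) := by
  obtain ⟨i, rfl⟩ := Nat.exists_eq_add_of_le hck
  have hsum : ∑ x ∈ Vk (c + i), (#(ideal (c + i) Auc x) : ℚ) / #(tileOf (BBA c i) x) =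
      ratioSum c i :=
    sum_congr rfl fun x hx => by rw [tileOf_BBA hx]
  rw [avgObjPAR, Nat.add_sub_cancel_left, hsum, ratioSum_eq, two_mul, pow_succ, pow_succ,
    pow_add, pow_add]
  field_simp
  ring

theorem avgObjPAR_Auc_BBA_bounds {c k : ℕ} (hck : c ≤ k) :
    ((c : ℚ) + 1) / 2 ≤ avgObjPAR k Auc (BBA c (k - c)) ∧
      avgObjPAR k Auc (BBA c (k - c)) ≤ ((c : ℚ) + 3) / 2 := by
  rw [avgObjPAR_Auc_BBA hck]
  have hc : (1 : ℚ) ≤ 2 ^ c := one_le_pow₀ one_le_two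
  have hck' : (2 : ℚ) ^ c ≤ 2 ^ k := pow_le_pow_right₀ one_le_two hck
  have h1 : 1 / (2 : ℚ) ^ (c + 1) ≤ 1 / 2 := by
    rw [pow_succ]; gcongr; linarith
  have h2 : ((2 : ℚ) ^ c - 1) / 2 ^ (k + 1) ≤ 1 / 2 := by
    rw [div_le_div_iff₀ (by positivity) two_pos, pow_succ]; linarith
  have h3 : 0 ≤ ((2 : ℚ) ^ c - 1) / 2 ^ (k + 1) := div_nonneg (by linarith) (by positivity)
  have h4 : (0 : ℚ) ≤ 1 / 2 ^ (c + 1) := by positivity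
  constructor <;> linarith

/-- for `g` with `0 ≤ g(k) ≤ k`, the sequence of average-case
objective PARs of `T_{g(k),k−g(k)}` for `A_k` is bounded iff `g` is bounded;
in particular, for `0 ≤ c ≤ k` this PAR lies between `(c+1)/2` and `(c+3)/2`. -/
theorem stmt13 (g : ℕ → ℕ) (hg : ∀ k, 1 ≤ k → g k ≤ k) :
    ((∃ M : ℚ, ∀ k, 1 ≤ k → avgObjPAR k Auc (BBA (g k) (k - g k)) ≤ M) ↔
        ∃ N : ℕ, ∀ k, g k ≤ N) ∧
      ∀ c k : ℕ, c ≤ k →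
        ((c : ℚ) + 1) / 2 ≤ avgObjPAR k Auc (BBA c (k - c)) ∧
          avgObjPAR k Auc (BBA c (k - c)) ≤ ((c : ℚ) + 3) / 2 := by
  refine ⟨⟨?_, ?_⟩, fun c k => avgObjPAR_Auc_BBA_bounds⟩
  · rintro ⟨M, hM⟩
    refine ⟨max (g 0) ⌈2 * M⌉₊, fun k => ?_⟩
    rcases Nat.eq_zero_or_pos k with rfl | hk
    · exact le_max_left _ _
    · have hlow := (avgObjPAR_Auc_BBA_bounds (hg k hk)).1
      have hgM : (g k : ℚ) ≤ 2 * M := by linarith [hM k hk]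
      exact (Nat.cast_le.mp (hgM.trans (Nat.le_ceil _))).trans (le_max_right _ _)
  · rintro ⟨N, hN⟩
    refine ⟨((N : ℚ) + 3) / 2, fun k hk => ?_⟩
    have hgN : (g k : ℚ) ≤ N := by exact_mod_cast hN k
    linarith [(avgObjPAR_Auc_BBA_bounds (hg k hk)).2]
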